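/- Let X be a nonempty closed L-pseudo-Lipschitz subset of the pseudo-Euclidean space ℝ_{(l,p)} with L < 1. Then the squared-distance function ρ(·,X) : ℝ^n → ℝ is continuous. -/

import Mathlib

/-!
Along `X` the pseudo-Lipschitz bound with `L < 1` makes `Q(x - a)` grow like
`(1 - L²) ‖x - x₀‖_l²`, uniformly for `a` in a bounded set. Hence near any `a₀` the infimum
defining `ρ(a, X)` is already attained on the compact set `X ∩ B̄(x₀, R)`, and the infimum of a
jointly continuous function over a fixed compact set depends continuously on the parameter.
-/

open Filter Topology Set

noncomputable section

/-- The pseudo-Euclidean space `ℝ_{(l,p)}`: `ℝ^(l+p)` with the Euclidean topology. -/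
abbrev PE (l p : ℕ) := EuclideanSpace ℝ (Fin (l + p))

/-- The quadratic form `Q(x) = ‖x‖_l² − ‖x‖_p²`. -/
def Q (l p : ℕ) (x : PE l p) : ℝ :=
  ∑ i : Fin (l + p), if (i : ℕ) < l then (x i) ^ 2 else -((x i) ^ 2)

/-- The pseudo-scalar product `⟪x,y⟫ = Σ_{i<l} x_i y_i − Σ_{i≥l} x_i y_i`. -/
def pseudoInner (l p : ℕ) (x y : PE l p) : ℝ :=
  ∑ i : Fin (l + p), if (i : ℕ) < l then x i * y i else -(x i * y i)

/-- `‖x‖_l`: the Euclidean norm of the first `l` coordinates. -/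
def normL (l p : ℕ) (x : PE l p) : ℝ :=
  Real.sqrt (∑ i : Fin (l + p), if (i : ℕ) < l then (x i) ^ 2 else 0)

/-- `‖x‖_p`: the Euclidean norm of the last `p` coordinates. -/
def normP (l p : ℕ) (x : PE l p) : ℝ :=
  Real.sqrt (∑ i : Fin (l + p), if (i : ℕ) < l then 0 else (x i) ^ 2)

/-- `X` is acausal: `Q(x−y) > 0` for all distinct `x, y ∈ X`. -/
def Acausal (l p : ℕ) (X : Set (PE l p)) : Prop :=
  ∀ x ∈ X, ∀ y ∈ X, x ≠ y → 0 < Q l p (x - y)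

/-- `X` is `L`-pseudo-Lipschitz: `L‖x−y‖_l ≥ ‖x−y‖_p` for all `x, y ∈ X`. -/
def PseudoLipschitz (l p : ℕ) (L : ℝ) (X : Set (PE l p)) : Prop :=
  ∀ x ∈ X, ∀ y ∈ X, normP l p (x - y) ≤ L * normL l p (x - y)

/-- The squared-distance function `ρ(a,X) = inf {Q(x−a) : x ∈ X}`. -/
def rho (l p : ℕ) (X : Set (PE l p)) (a : PE l p) : ℝ :=
  sInf ((fun x => Q l p (x - a)) '' X)

/-- The set of closest points `m(a) = {x ∈ X : Q(x−a) = ρ(a,X)}`, via its equivalent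
description `m(a) = {x ∈ X : ∀ b ∈ X, Q(x−a) ≤ Q(b−a)}`. -/
def mm (l p : ℕ) (X : Set (PE l p)) (a : PE l p) : Set (PE l p) :=
  {x ∈ X | ∀ b ∈ X, Q l p (x - a) ≤ Q l p (b - a)}

/-- The medial axis `M_X`: points with at least two closest points in `X`. -/
def medialAxis (l p : ℕ) (X : Set (PE l p)) : Set (PE l p) :=
  {a | (mm l p X a).Nontrivial}

/-- The vacant axis `W_X`: points with no closest point in `X`. -/
def vacantAxis (l p : ℕ) (X : Set (PE l p)) : Set (PE l p) :=
  {a | mm l p X a = ∅}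

/-- The normal set `N(a) = {x : a ∈ m(x)}`. -/
def NN (l p : ℕ) (X : Set (PE l p)) (a : PE l p) : Set (PE l p) :=
  {x | a ∈ mm l p X x}

/-- The strict normal set `N'(a) = {x : m(x) = {a}}`. -/
def NN' (l p : ℕ) (X : Set (PE l p)) (a : PE l p) : Set (PE l p) :=
  {x | mm l p X x = {a}}

theorem csInf_image_eq_of_forall_exists_le {α β : Type*} [ConditionallyCompleteLattice α]
    {g : β → α} {S X : Set β} (hSX : S ⊆ X) (hS : S.Nonempty) (hbdd : BddBelow (g '' S))
    (h : ∀ x ∈ X, ∃ y ∈ S, g y ≤ g x) : sInf (g '' X) = sInf (g '' S) := by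
  obtain ⟨b, hb⟩ := hbdd
  have hbX : BddBelow (g '' X) := ⟨b, forall_mem_image.2 fun x hx => by
    obtain ⟨y, hy, hyx⟩ := h x hx
    exact (hb (mem_image_of_mem g hy)).trans hyx⟩
  refine le_antisymm (csInf_le_csInf hbX (hS.image g) (image_mono hSX))
    (le_csInf ((hS.mono hSX).image g) (forall_mem_image.2 fun x hx => ?_))
  obtain ⟨y, hy, hyx⟩ := h x hx
  exact (csInf_le ⟨b, hb⟩ (mem_image_of_mem g hy)).trans hyx

section PseudoEuclidean

variable {l p : ℕ}

def projL (x : PE l p) : PE l p :=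
  WithLp.toLp 2 fun i : Fin (l + p) => if (i : ℕ) < l then x i else 0

def projP (x : PE l p) : PE l p :=
  WithLp.toLp 2 fun i : Fin (l + p) => if (i : ℕ) < l then 0 else x i

theorem norm_projL (x : PE l p) : ‖projL x‖ = normL l p x := by
  rw [EuclideanSpace.norm_eq, normL]
  congr 1
  refine Finset.sum_congr rfl fun i _ => ?_
  by_cases h : (i : ℕ) < l <;> simp [projL, h]

theorem norm_projP (x : PE l p) : ‖projP x‖ = normP l p x := by
  rw [EuclideanSpace.norm_eq, normP]
  congr 1
  refine Finset.sum_congr rfl fun i _ => ?_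
  by_cases h : (i : ℕ) < l <;> simp [projP, h]

theorem projL_add (x y : PE l p) : projL (x + y) = projL x + projL y := by
  ext i; by_cases h : (i : ℕ) < l <;> simp [projL, h]

theorem projP_add (x y : PE l p) : projP (x + y) = projP x + projP y := by
  ext i; by_cases h : (i : ℕ) < l <;> simp [projP, h]

theorem projL_add_projP (x : PE l p) : projL x + projP x = x := by
  ext i; by_cases h : (i : ℕ) < l <;> simp [projL, projP, h]

theorem normL_nonneg (x : PE l p) : 0 ≤ normL l p x := Real.sqrt_nonneg _

theorem normP_nonneg (x : PE l p) : 0 ≤ normP l p x := Real.sqrt_nonneg _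

theorem normL_add_le (x y : PE l p) : normL l p (x + y) ≤ normL l p x + normL l p y := by
  simpa only [← norm_projL, projL_add] using norm_add_le (projL x) (projL y)

theorem normP_add_le (x y : PE l p) : normP l p (x + y) ≤ normP l p x + normP l p y := by
  simpa only [← norm_projP, projP_add] using norm_add_le (projP x) (projP y)

theorem norm_le_normL_add_normP (x : PE l p) : ‖x‖ ≤ normL l p x + normP l p x := by
  simpa only [← norm_projL, ← norm_projP, projL_add_projP] using
    norm_add_le (projL x) (projP x)

theorem normL_le_norm (x : PE l p) : normL l p x ≤ ‖x‖ := by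
  rw [← norm_projL, EuclideanSpace.norm_eq, EuclideanSpace.norm_eq]
  refine Real.sqrt_le_sqrt (Finset.sum_le_sum fun i _ => ?_)
  by_cases h : (i : ℕ) < l <;> simp [projL, h, sq_nonneg]

theorem normP_le_norm (x : PE l p) : normP l p x ≤ ‖x‖ := by
  rw [← norm_projP, EuclideanSpace.norm_eq, EuclideanSpace.norm_eq]
  refine Real.sqrt_le_sqrt (Finset.sum_le_sum fun i _ => ?_)
  by_cases h : (i : ℕ) < l <;> simp [projP, h, sq_nonneg]

theorem Q_eq_normL_sq_sub_normP_sq (x : PE l p) :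
    Q l p x = normL l p x ^ 2 - normP l p x ^ 2 := by
  rw [← norm_projL, ← norm_projP, EuclideanSpace.norm_eq, EuclideanSpace.norm_eq,
    Real.sq_sqrt (by positivity), Real.sq_sqrt (by positivity), Q, ← Finset.sum_sub_distrib]
  refine Finset.sum_congr rfl fun i _ => ?_
  by_cases h : (i : ℕ) < l <;> simp [projL, projP, h]

theorem Q_le_norm_sq (x : PE l p) : Q l p x ≤ ‖x‖ ^ 2 := by
  rw [Q_eq_normL_sq_sub_normP_sq]
  nlinarith [normL_le_norm x, normL_nonneg x]

theorem continuous_Q : Continuous (Q l p) := by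
  refine continuous_finsetSum _ fun i _ => ?_
  split_ifs <;> fun_prop

theorem PseudoLipschitz.mono {L L' : ℝ} {X : Set (PE l p)} (hX : PseudoLipschitz l p L X)
    (hL : L ≤ L') : PseudoLipschitz l p L' X := fun x hx y hy =>
  (hX x hx y hy).trans (mul_le_mul_of_nonneg_right hL (normL_nonneg _))

theorem sq_sub_sq_le_Q_sub {L : ℝ} {x y a : PE l p}
    (hP : normP l p (x - y) ≤ L * normL l p (x - y)) (hd : ‖y - a‖ ≤ normL l p (x - y)) :
    (normL l p (x - y) - ‖y - a‖) ^ 2 - (L * normL l p (x - y) + ‖y - a‖) ^ 2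
      ≤ Q l p (x - a) := by
  have hnormL : normL l p (x - y) - ‖y - a‖ ≤ normL l p (x - a) := by
    have := normL_add_le (x - a) (a - y)
    rw [sub_add_sub_cancel] at this
    linarith [normL_le_norm (a - y), norm_sub_rev a y]
  have hnormP : normP l p (x - a) ≤ L * normL l p (x - y) + ‖y - a‖ := by
    have := normP_add_le (x - y) (y - a)
    rw [sub_add_sub_cancel] at this
    linarith [normP_le_norm (y - a)]
  rw [Q_eq_normL_sq_sub_normP_sq]
  gcongr ?_ ^ 2 - ?_ ^ 2
  exact normP_nonneg _

theorem PseudoLipschitz.exists_Q_sub_le_of_lt_norm {L : ℝ} (hL : L < 1) {X : Set (PE l p)}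
    (hlip : PseudoLipschitz l p L X) {x₀ : PE l p} (hx₀ : x₀ ∈ X) (r : ℝ) :
    ∃ R, ∀ a, ‖x₀ - a‖ ≤ r → ∀ x ∈ X, R < ‖x - x₀‖ → Q l p (x₀ - a) ≤ Q l p (x - a) := by
  set L' := max L 0
  have hL'0 : 0 ≤ L' := le_max_right _ _
  have hL'1 : L' < 1 := max_lt hL one_pos
  have hc : 0 < 1 - L' ^ 2 := by nlinarith
  set s := max r 0
  have hs : 0 ≤ s := le_max_right _ _
  refine ⟨10 * s / (1 - L' ^ 2), fun a ha x hx hR => ?_⟩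
  set t := normL l p (x - x₀)
  set d := ‖x₀ - a‖
  have hd : d ≤ s := ha.trans (le_max_left _ _)
  have ht0 : 0 ≤ t := normL_nonneg _
  have hP : normP l p (x - x₀) ≤ L' * t := hlip.mono (le_max_left _ _) x hx x₀ hx₀
  have hnorm : ‖x - x₀‖ ≤ 2 * t := by nlinarith [norm_le_normL_add_normP (x - x₀)]
  have ht : 5 * s < (1 - L' ^ 2) * t := by
    rw [div_lt_iff₀ hc] at hR
    nlinarith
  have hdt : d ≤ t := hd.trans (by nlinarith)
  calc Q l p (x₀ - a) ≤ d ^ 2 := Q_le_norm_sq _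
    _ ≤ (1 - L' ^ 2) * t ^ 2 - 2 * (1 + L') * d * t := by
      have h1 : 2 * (1 + L') * d * t ≤ 4 * s * t := by gcongr; linarith
      have h2 : 5 * s * t ≤ (1 - L' ^ 2) * t ^ 2 := by nlinarith
      nlinarith [norm_nonneg (x₀ - a)]
    _ = (t - d) ^ 2 - (L' * t + d) ^ 2 := by ring
    _ ≤ Q l p (x - a) := sq_sub_sq_le_Q_sub hP hdt

end PseudoEuclidean

theorem rho_continuous_general (l p : ℕ) (L : ℝ) (hL : L < 1)
    (X : Set (PE l p)) (hne : X.Nonempty) (hX : IsClosed X)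
    (hlip : PseudoLipschitz l p L X) :
    Continuous (rho l p X) := by
  obtain ⟨x₀, hx₀⟩ := hne
  refine continuous_iff_continuousAt.2 fun a₀ => ?_
  obtain ⟨R, hR⟩ := hlip.exists_Q_sub_le_of_lt_norm hL hx₀ (‖x₀ - a₀‖ + 1)
  set S := X ∩ Metric.closedBall x₀ (max R 0)
  have hSc : IsCompact S := (isCompact_closedBall x₀ _).inter_left hX
  have hx₀S : x₀ ∈ S := ⟨hx₀, Metric.mem_closedBall_self (le_max_right _ _)⟩
  have hQ : Continuous ↿(fun a x : PE l p => Q l p (x - a)) :=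
    continuous_Q.comp (continuous_snd.sub continuous_fst)
  have hlocal : (fun a => sInf ((fun x => Q l p (x - a)) '' S)) =ᶠ[𝓝 a₀] rho l p X := by
    filter_upwards [Metric.closedBall_mem_nhds a₀ one_pos] with a ha
    refine (csInf_image_eq_of_forall_exists_le inter_subset_left ⟨x₀, hx₀S⟩
      ((hSc.image (hQ.comp (Continuous.prodMk_right a))).bddBelow) fun x hx => ?_).symm
    by_cases hxS : x ∈ S
    · exact ⟨x, hxS, le_rfl⟩
    refine ⟨x₀, hx₀S, hR a ?_ x hx ?_⟩
    · rw [Metric.mem_closedBall, dist_eq_norm] at ha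
      linarith [norm_sub_le_norm_sub_add_norm_sub x₀ a₀ a, norm_sub_rev a a₀]
    · simp only [S, mem_inter_iff, hx, true_and, Metric.mem_closedBall, dist_eq_norm,
        not_le] at hxS
      exact (le_max_left _ _).trans_lt hxS
  exact (hSc.continuous_sInf hQ).continuousAt.congr hlocal

/-- For nonempty closed `L`-pseudo-Lipschitz `X` with `L < 1`, the
squared-distance function `ρ(·,X)` is continuous on `ℝ^n`. -/
theorem rho_continuous (l p : ℕ) (hl : 1 ≤ l) (L : ℝ) (hL : L < 1)
    (X : Set (PE l p)) (hne : X.Nonempty) (hX : IsClosed X)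
    (hlip : PseudoLipschitz l p L X) :
    Continuous (rho l p X) :=
  rho_continuous_general l p L hL X hne hX hlip
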